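/- arXiv:2204.10478 — 2 statements merged into one kernel-verified Lean document; each statement's English description precedes it below -/
import Mathlib

section
/- Let μ_1^* be the Borel probability measure on [1/e, 1] with CDF Φ(p) = 1 + log p for p ∈ [1/e, 1]. Then for all real numbers a, b with 0 ≤ b ≤ a ≤ 1: a − ∫_{[0,1]} max(b, p)·1{p ≤ a} dμ_1^*(p) ≤ 1/e, with equality if and only if b ≤ 1/e ≤ a. Consequently, for every integer n ≥ 1 and every Borel probability measure G on [0,1]^n (not necessarily a product measure), the regret of the second-price auction with random reserve μ_1^* against G satisfies Regret(μ_1^*, G) ≤ 1/e. -/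
/-! `μ₁*` has density `1 / p` on `(1/e, 1]`. If `a < 1/e` the reserve always exceeds `a`, nothing
is paid and the regret is `a < 1/e`. If `a ≥ 1/e`, put `c = max b (1/e)`: the expected payment is
`∫_{1/e}^{c} c / p dp + (a - c) = a + c log c`, so the regret is `-c log c`, and `x ↦ x log x` is
strictly increasing on `[1/e, ∞)`, whence `-c log c ≤ 1/e` with equality iff `c = 1/e`, i.e.
`b ≤ 1/e`. Integrating the pointwise bound against `G` bounds the regret. -/

open MeasureTheory Real Set ENNReal

noncomputable section

/-- Largest coordinate of `v`. -/
def top1 {n : ℕ} (v : Fin n → ℝ) : ℝ := ⨆ i, v i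

/-- Second-largest coordinate of `v` (junk value `0` when `n = 1`). -/
def top2 {n : ℕ} (v : Fin n → ℝ) : ℝ := ⨅ i, ⨆ j ∈ ({i}ᶜ : Set (Fin n)), v j

/-- Regret of the second-price auction with random reserve `μ` against value distribution `G`. -/
def spaRegret (n : ℕ) (μ : Measure ℝ) (G : Measure (Fin n → ℝ)) : ℝ :=
  ∫ v in Set.Icc (0 : Fin n → ℝ) 1,
    (top1 v - ∫ p in Set.Icc (0:ℝ) 1, (if p ≤ top1 v then max (top2 v) p else 0) ∂μ) ∂G

def gfun (n : ℕ) (r : ℝ) : ℝ :=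
  (1 - r) ^ (n - 1) + Real.log r + ∑ k ∈ Finset.Icc 1 (n-1), (1 - r) ^ k / (k : ℝ)

def Phi (n : ℕ) (rs : ℝ) (v : ℝ) : ℝ :=
  if v ≤ rs then 0
  else (v / (v - rs)) ^ (n - 1) * Real.log (v / rs)
       - ∑ k ∈ Finset.Icc 1 (n-1), (1 / (k:ℝ)) * (v / (v - rs)) ^ (n - 1 - k)

def PhiExt (n : ℕ) (rs : ℝ) (v : ℝ) : ℝ := if v ≤ 1 then Phi n rs v else 1

def isoCDF (r : ℝ) (v : ℝ) : ℝ := if v < r then 0 else if v < 1 then 1 - r / v else 1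

/-- Regret of a direct mechanism with payment rule `p` against value distribution `G`. -/
def mechRegret (n : ℕ) (p : (Fin n → ℝ) → Fin n → ℝ) (G : Measure (Fin n → ℝ)) : ℝ :=
  ∫ v in Set.Icc (0 : Fin n → ℝ) 1, (top1 v - ∑ i, p v i) ∂G

/-- Dominant-strategy incentive compatible mechanism for `n` buyers with values in `[0,1]`. -/
def DSIC (n : ℕ) (x p : (Fin n → ℝ) → Fin n → ℝ) : Prop :=
  Measurable x ∧ Measurable p ∧ (∃ C, ∀ v i, |p v i| ≤ C) ∧
  ∀ v ∈ Set.Icc (0 : Fin n → ℝ) 1, (∑ j, x v j) ≤ 1 ∧ ∀ i,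
    0 ≤ x v i ∧ 0 ≤ v i * x v i - p v i ∧
    ∀ w ∈ Set.Icc (0:ℝ) 1,
      v i * x (Function.update v i w) i - p (Function.update v i w) i ≤ v i * x v i - p v i

def Exchangeable (n : ℕ) (μ : Measure (Fin n → ℝ)) : Prop :=
  ∀ σ : Equiv.Perm (Fin n), Measure.map (fun v i => v (σ i)) μ = μ

def Affiliated (n : ℕ) (μ : Measure (Fin n → ℝ)) : Prop :=
  ∃ (lam : Measure ℝ) (f : (Fin n → ℝ) → ℝ≥0∞), Measurable f ∧
    μ = (Measure.pi fun _ : Fin n => lam).withDensity f ∧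
    ∀ᵐ q ∂((Measure.pi fun _ : Fin n => lam).prod (Measure.pi fun _ : Fin n => lam)),
      f q.1 * f q.2 ≤ f (q.1 ⊓ q.2) * f (q.1 ⊔ q.2)

def worstCase (n : ℕ) (p : (Fin n → ℝ) → Fin n → ℝ) (C : Set (Measure (Fin n → ℝ))) : ℝ :=
  sSup {w | ∃ G ∈ C, w = mechRegret n p G}

def minimaxRegret (n : ℕ) (C : Set (Measure (Fin n → ℝ))) : ℝ :=
  sInf {w | ∃ x p, DSIC n x p ∧ w = worstCase n p C}

def iidClass (n : ℕ) : Set (Measure (Fin n → ℝ)) :=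
  {G | ∃ F : Measure ℝ, IsProbabilityMeasure F ∧ F (Set.Icc 0 1) = 1 ∧
        G = Measure.pi fun _ => F}

def affClass (n : ℕ) : Set (Measure (Fin n → ℝ)) :=
  {G | IsProbabilityMeasure G ∧ G (Set.Icc 0 1) = 1 ∧ Exchangeable n G ∧ Affiliated n G}

def exchClass (n : ℕ) : Set (Measure (Fin n → ℝ)) :=
  {G | IsProbabilityMeasure G ∧ G (Set.Icc 0 1) = 1 ∧ Exchangeable n G}

def allClass (n : ℕ) : Set (Measure (Fin n → ℝ)) :=
  {G | IsProbabilityMeasure G ∧ G (Set.Icc 0 1) = 1}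


/-- CDF of the single-buyer optimal reserve distribution `μ₁*`: `0` below `1/e`,
`1 + log p` on `[1/e, 1]`, and `1` above `1`. -/
def cdf1 (v : ℝ) : ℝ :=
  if v < Real.exp (-1) then 0 else if v ≤ 1 then 1 + Real.log v else 1

def optReserve : Measure ℝ :=
  (volume.restrict (Ioc (exp (-1)) 1)).withDensity fun p => ENNReal.ofReal p⁻¹

lemma lintegral_ofReal_inv_Ioc {s t : ℝ} (hs : 0 < s) (hst : s ≤ t) :
    ∫⁻ p in Ioc s t, ENNReal.ofReal p⁻¹ = ENNReal.ofReal (log (t / s)) := by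
  have hint : IntegrableOn (fun p : ℝ => p⁻¹) (Ioc s t) :=
    (intervalIntegrable_iff_integrableOn_Ioc_of_le hst).1 <|
      intervalIntegral.intervalIntegrable_inv (fun p hp => by
        rw [uIcc_of_le hst] at hp; exact (hs.trans_le hp.1).ne') continuousOn_id
  rw [← ofReal_integral_eq_lintegral_ofReal hint, ← intervalIntegral.integral_of_le hst,
    integral_inv_of_pos hs (hs.trans_le hst)]
  filter_upwards [ae_restrict_mem measurableSet_Ioc] with p hp
  exact inv_nonneg.2 (hs.trans hp.1).le

lemma optReserve_Iic (v : ℝ) : optReserve (Iic v) = ENNReal.ofReal (cdf1 v) := by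
  rw [optReserve, withDensity_apply _ measurableSet_Iic, Measure.restrict_restrict measurableSet_Iic,
    inter_comm, Ioc_inter_Iic]
  rcases lt_or_ge v (exp (-1)) with hv | hv
  · rw [Ioc_eq_empty_of_le (inf_le_right.trans hv.le), cdf1, if_pos hv]
    simp
  · have hmin : exp (-1) ≤ 1 ⊓ v := le_inf (exp_le_one_iff.2 (by norm_num)) hv
    have hcdf : cdf1 v = 1 + log (1 ⊓ v) := by
      rcases le_or_gt v 1 with hv1 | hv1
      · simp [cdf1, not_lt.2 hv, hv1]
      · simp [cdf1, not_lt.2 hv, not_le.2 hv1, hv1.le]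
    rw [lintegral_ofReal_inv_Ioc (exp_pos _) hmin, hcdf,
      log_div (exp_pos _ |>.trans_le hmin).ne' (exp_pos _).ne', log_exp]
    ring_nf

lemma eq_optReserve_of_cdf (μ : Measure ℝ) [IsProbabilityMeasure μ]
    (hμ : ∀ v, μ (Iic v) = ENNReal.ofReal (cdf1 v)) : μ = optReserve :=
  Measure.ext_of_Iic μ optReserve fun v => by rw [hμ v, optReserve_Iic]

lemma setIntegral_Icc_optReserve (g : ℝ → ℝ) :
    ∫ p in Icc 0 1, g p ∂optReserve = ∫ p in Ioc (exp (-1)) 1, g p / p := by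
  rw [optReserve, setIntegral_withDensity_eq_setIntegral_toReal_smul (by fun_prop)
      (ae_of_all _ fun _ => ofReal_lt_top) g measurableSet_Icc,
    Measure.restrict_restrict measurableSet_Icc,
    inter_eq_right.2 (Ioc_subset_Icc_self.trans (Icc_subset_Icc_left (exp_pos _).le))]
  refine setIntegral_congr_fun measurableSet_Ioc fun p hp => ?_
  rw [toReal_ofReal (inv_nonneg.2 ((exp_pos _).trans hp.1).le), smul_eq_mul, div_eq_inv_mul]

lemma integral_max_div_Ioc {s b a : ℝ} (hs : 0 < s) (hsb : s ≤ b) (hba : b ≤ a) :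
    ∫ p in Ioc s a, max b p / p = b * log (b / s) + (a - b) := by
  have hint : ∀ {x y}, s ≤ x → x ≤ y → IntervalIntegrable (fun p => max b p / p) volume x y :=
    fun hx hxy => ContinuousOn.intervalIntegrable <| by
      rw [uIcc_of_le hxy]
      exact (continuous_const.max continuous_id).continuousOn.div continuousOn_id
        fun p hp => (hs.trans_le (hx.trans hp.1)).ne'
  rw [← intervalIntegral.integral_of_le (hsb.trans hba),
    ← intervalIntegral.integral_add_adjacent_intervals (hint le_rfl hsb) (hint hsb hba)]
  have below : ∫ p in s..b, max b p / p = ∫ p in s..b, b * p⁻¹ :=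
    intervalIntegral.integral_congr fun p hp => by
      rw [uIcc_of_le hsb] at hp
      rw [max_eq_left hp.2, div_eq_mul_inv]
  have above : ∫ p in b..a, max b p / p = ∫ _ in b..a, (1 : ℝ) :=
    intervalIntegral.integral_congr fun p hp => by
      rw [uIcc_of_le hba] at hp
      rw [max_eq_right hp.1, div_self (hs.trans_le (hsb.trans hp.1)).ne']
  rw [below, above, intervalIntegral.integral_const_mul, integral_inv_of_pos hs (hs.trans_le hsb),
    intervalIntegral.integral_const, smul_eq_mul, mul_one]

lemma optReserve_regret {a b : ℝ} (hba : b ≤ a) (ha1 : a ≤ 1) :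
    a - ∫ p in Icc 0 1, (if p ≤ a then max b p else 0) ∂optReserve =
      if a < exp (-1) then a else -(max b (exp (-1)) * log (max b (exp (-1)))) := by
  rw [setIntegral_Icc_optReserve]
  split_ifs with ha
  · rw [setIntegral_congr_fun measurableSet_Ioc (g := fun _ => (0 : ℝ))
      fun p hp => by simp [not_le.2 (ha.trans hp.1)], integral_zero, sub_zero]
  · set c := max b (exp (-1))
    have hc : exp (-1) ≤ c := le_max_right _ _
    -- on `(1/e, 1]` the reserve already exceeds `1/e`, so `b` may be replaced by `c`
    have hpay : ∫ p in Ioc (exp (-1)) 1, (if p ≤ a then max b p else 0) / p =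
        ∫ p in Ioc (exp (-1)) 1, (Iic a).indicator (fun p => max c p / p) p :=
      setIntegral_congr_fun measurableSet_Ioc fun p hp => by
        by_cases hpa : p ≤ a
        · simp [hpa, c, max_assoc, max_eq_right hp.1.le]
        · simp [hpa]
    rw [hpay, setIntegral_indicator measurableSet_Iic, Ioc_inter_Iic, inf_eq_right.2 ha1,
      integral_max_div_Ioc (exp_pos _) hc (max_le hba (not_lt.1 ha)),
      log_div ((exp_pos _).trans_le hc).ne' (exp_pos _).ne', log_exp]
    ring

lemma neg_mul_log_le_exp_neg_one {c : ℝ} (hc : exp (-1) ≤ c) : -(c * log c) ≤ exp (-1) := by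
  have := mul_log_strictMonoOn.monotoneOn (mem_Ici.2 le_rfl) hc hc
  simp only [log_exp] at this
  linarith

lemma neg_mul_log_eq_exp_neg_one_iff {c : ℝ} (hc : exp (-1) ≤ c) :
    -(c * log c) = exp (-1) ↔ c = exp (-1) := by
  have := mul_log_strictMonoOn.injOn.eq_iff (hc : c ∈ Ici _) (mem_Ici.2 le_rfl)
  simp only [log_exp] at this
  rw [← this]
  constructor <;> intro h <;> linarith

lemma optReserve_regret_le_and_eq_iff {a b : ℝ} (hba : b ≤ a) (ha1 : a ≤ 1) :
    (a - ∫ p in Icc 0 1, (if p ≤ a then max b p else 0) ∂optReserve ≤ exp (-1)) ∧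
    ((a - ∫ p in Icc 0 1, (if p ≤ a then max b p else 0) ∂optReserve) = exp (-1) ↔
      b ≤ exp (-1) ∧ exp (-1) ≤ a) := by
  rw [optReserve_regret hba ha1]
  split_ifs with ha
  · exact ⟨ha.le, fun h => absurd h ha.ne, fun h => absurd h.2 (not_le.2 ha)⟩
  · have hc : exp (-1) ≤ max b (exp (-1)) := le_max_right _ _
    rw [neg_mul_log_eq_exp_neg_one_iff hc, max_eq_right_iff]
    exact ⟨neg_mul_log_le_exp_neg_one hc, by simp [not_lt.1 ha]⟩

lemma top2_le_top1 {n : ℕ} {v : Fin n → ℝ} (hv : 0 ≤ v) : top2 v ≤ top1 v := by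
  have top1_nonneg : 0 ≤ top1 v := Real.iSup_nonneg hv
  rcases isEmpty_or_nonempty (Fin n) with hn | ⟨⟨i⟩⟩
  · simpa [top2] using top1_nonneg
  · refine (ciInf_le (finite_range _).bddBelow i).trans ?_
    exact Real.iSup_le (fun j => Real.iSup_le (fun _ => le_ciSup (finite_range v).bddAbove j)
      top1_nonneg) top1_nonneg

lemma setIntegral_le_of_forall_le {α : Type*} [MeasurableSpace α] {G : Measure α} {s : Set α}
    (hs : MeasurableSet s) (hGs : G s ≤ 1) {f : α → ℝ} {C : ℝ} (hC : 0 ≤ C)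
    (hf : ∀ x ∈ s, f x ≤ C) : ∫ x in s, f x ∂G ≤ C := by
  by_cases hint : IntegrableOn f s G
  · calc ∫ x in s, f x ∂G ≤ ∫ _ in s, C ∂G :=
          setIntegral_mono_on hint (integrableOn_const (hGs.trans_lt one_lt_top).ne) hs hf
      _ = G.real s * C := by rw [setIntegral_const, smul_eq_mul]
      _ ≤ C := mul_le_of_le_one_left hC (toReal_le_of_le_ofReal zero_le_one (by simpa using hGs))
  · rw [integral_undef hint]
    exact hC

/-- the pointwise regret of a SPA with random reserve `μ₁*` when the
highest value is `a` and second-highest is `b` (`0 ≤ b ≤ a ≤ 1`) is at most `1/e`, with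
equality iff `b ≤ 1/e ≤ a`; consequently `Regret(μ₁*, G) ≤ 1/e` for every Borel
probability measure `G` on `[0,1]^n`. -/
theorem stmt15 (μ : Measure ℝ) [IsProbabilityMeasure μ]
    (hμ : ∀ v : ℝ, μ (Set.Iic v) = ENNReal.ofReal (cdf1 v)) :
    (∀ a b : ℝ, 0 ≤ b → b ≤ a → a ≤ 1 →
      (a - ∫ p in Set.Icc (0:ℝ) 1, (if p ≤ a then max b p else 0) ∂μ ≤ Real.exp (-1)) ∧
      ((a - ∫ p in Set.Icc (0:ℝ) 1, (if p ≤ a then max b p else 0) ∂μ) = Real.exp (-1)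
        ↔ b ≤ Real.exp (-1) ∧ Real.exp (-1) ≤ a)) ∧
    (∀ n : ℕ, 1 ≤ n → ∀ G : Measure (Fin n → ℝ), IsProbabilityMeasure G →
      G (Set.Icc 0 1) = 1 → spaRegret n μ G ≤ Real.exp (-1)) := by
  obtain rfl := eq_optReserve_of_cdf μ hμ
  refine ⟨fun a b _ => optReserve_regret_le_and_eq_iff, fun n _ G _ hG => ?_⟩
  refine setIntegral_le_of_forall_le measurableSet_Icc hG.le (exp_pos _).le fun v hv => ?_
  exact (optReserve_regret_le_and_eq_iff (top2_le_top1 hv.1) (Real.iSup_le hv.2 zero_le_one)).1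
end
end

section
/- Let n ≥ 1 be an integer and let F^* be the Borel probability measure on [0,1]^n that is the uniform mixture over k ∈ {1, …, n} of the measures F^{*,k}, where under F^{*,k} all coordinates v_i with i ≠ k equal 0 and coordinate v_k is distributed according to the isorevenue distribution with parameter 1/e. Then for every DSIC mechanism (x, p) for n buyers with values in [0,1], Regret((x,p), F^*) ≥ 1/e. Hence, since F^* is exchangeable, the minimax regret over all joint distributions on [0,1]^n, and over all exchangeable distributions on [0,1]^n, equals 1/e for every n. -/
open MeasureTheory Real Set ENNReal

noncomputable section

/-!
Lower bound: under `F*` a single buyer, chosen uniformly, has a nonzero value, distributed as the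
isorevenue distribution `F_r` with `r = e⁻¹`, whose mean is `r * (1 - log r) = 2 r`. Against
`F_r` every posted price earns exactly `r`, and by Myerson's payment identity no truthful
single-buyer mechanism earns more; the other buyers pay nothing by individual rationality. So every
DSIC mechanism has regret at least `2 r - r = r`.

Upper bound: the second-price auction with a random reserve price of distribution function
`1 + log p` on `[e⁻¹, 1]` is DSIC, and at every value profile its regret is at most
`-m * log m ≤ e⁻¹`, where `m` is the highest competing bid clamped to `[e⁻¹, 1]`. Since `F*` is
exchangeable, the two bounds meet in both classes of priors.
-/

open Filter Topology Interval

lemma le_setIntegral_uniform_mixture {α : Type*} [MeasurableSpace α] {n : ℕ} (hn : n ≠ 0)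
    {μ : Fin n → Measure α} {s : Set α} (hs : MeasurableSet s) {f : α → ℝ} {c : ℝ}
    (hf : ∀ k, IntegrableOn f s (μ k)) (hc : ∀ k, c ≤ ∫ a in s, f a ∂μ k) :
    c ≤ ∫ a in s, f a ∂((n : ℝ≥0∞)⁻¹ • ∑ k, μ k) := by
  rw [← integral_indicator hs, integral_smul_measure,
    integral_finsetSum_measure fun k _ => (integrable_indicator_iff hs).mpr (hf k)]
  simp_rw [integral_indicator hs]
  rw [ENNReal.toReal_inv, ENNReal.toReal_natCast, smul_eq_mul]
  calc c = (n : ℝ)⁻¹ * ∑ _k : Fin n, c := by simp [field]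
    _ ≤ _ := by gcongr with k; exact hc k

lemma uniform_mixture_apply_eq_one {α : Type*} [MeasurableSpace α] {n : ℕ} (hn : n ≠ 0)
    {μ : Fin n → Measure α} {s : Set α} (h : ∀ k, μ k s = 1) :
    ((n : ℝ≥0∞)⁻¹ • ∑ k, μ k) s = 1 := by
  simp [h, ENNReal.inv_mul_cancel (Nat.cast_ne_zero.mpr hn) (ENNReal.natCast_ne_top n)]

lemma deriv_eq_of_forall_add_mul_le {u : ℝ → ℝ} {t c : ℝ} (hu : DifferentiableAt ℝ u t)
    (h : ∀ᶠ s in 𝓝 t, u t + (s - t) * c ≤ u s) : deriv u t = c := by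
  have hmin : IsLocalMin (fun s => u s - (s - t) * c) t :=
    h.mono fun s hs => by simp only [sub_self, zero_mul, sub_zero]; linarith
  have hderiv := hu.hasDerivAt.sub (((hasDerivAt_id t).sub_const t).mul_const c)
  have := hmin.hasDerivAt_eq_zero hderiv
  simp only [one_mul] at this
  linarith

/-- The isorevenue distribution `F_r`, with its density put on `(r, 1]` instead of `[r, 1)` (a null
change) to match the interval integral `∫ t in r..1`. -/
def isoMeasure (r : ℝ) : Measure ℝ :=
  (volume.restrict (Ioc r 1)).withDensity (fun t => ENNReal.ofReal (r / t ^ 2)) +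
    ENNReal.ofReal r • Measure.dirac 1

section Isorevenue

variable {r : ℝ}

lemma integral_div_sq {m : ℝ} (hr : 0 < r) (hm : r ≤ m) :
    ∫ t in r..m, r / t ^ 2 = 1 - r / m := by
  have hderiv : ∀ t ∈ uIcc r m, HasDerivAt (fun t => -(r / t)) (r / t ^ 2) t := by
    intro t ht
    have ht0 : t ≠ 0 := (hr.trans_le (uIcc_of_le hm ▸ ht).1).ne'
    simpa [div_eq_mul_inv] using (hasDerivAt_inv ht0).const_mul (-r)
  have hcont : ContinuousOn (fun t => r / t ^ 2) (uIcc r m) := by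
    refine continuousOn_const.div (continuousOn_pow 2) fun t ht => ?_
    exact pow_ne_zero 2 (hr.trans_le (uIcc_of_le hm ▸ ht).1).ne'
  rw [intervalIntegral.integral_eq_sub_of_hasDerivAt hderiv hcont.intervalIntegrable,
    div_self hr.ne']
  ring

lemma lintegral_Ioc_div_sq {m : ℝ} (hr : 0 < r) (hm : r ≤ m) :
    ∫⁻ t in Ioc r m, ENNReal.ofReal (r / t ^ 2) = ENNReal.ofReal (1 - r / m) := by
  have hint : IntegrableOn (fun t => r / t ^ 2) (Icc r m) := by
    refine ContinuousOn.integrableOn_Icc (continuousOn_const.div (continuousOn_pow 2) ?_)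
    exact fun t ht => pow_ne_zero 2 (hr.trans_le ht.1).ne'
  rw [← integral_div_sq hr hm, intervalIntegral.integral_of_le hm,
    ofReal_integral_eq_lintegral_ofReal (hint.mono_set Ioc_subset_Icc_self)]
  exact ae_of_all _ fun t => by positivity

lemma isoMeasure_Iic (hr : 0 < r) (hr1 : r ≤ 1) (v : ℝ) :
    isoMeasure r (Iic v) = ENNReal.ofReal (isoCDF r v) := by
  rw [isoMeasure, Measure.add_apply, withDensity_apply _ measurableSet_Iic,
    Measure.restrict_restrict measurableSet_Iic, inter_comm, Ioc_inter_Iic, Measure.smul_apply,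
    Measure.dirac_apply' _ measurableSet_Iic, smul_eq_mul, isoCDF]
  rcases lt_or_ge v r with hv | hv
  · have h1 : (1 : ℝ) ∉ Iic v := fun h => by linarith [mem_Iic.mp h]
    simp [hv, h1, Ioc_eq_empty_of_le ((min_le_right 1 v).trans hv.le)]
  rcases lt_or_ge v 1 with hv1 | hv1
  · have h1 : (1 : ℝ) ∉ Iic v := fun h => by linarith [mem_Iic.mp h]
    simp [hv1, h1, not_lt.mpr hv, min_eq_right hv1.le, lintegral_Ioc_div_sq hr hv]
  · rw [min_eq_left hv1, lintegral_Ioc_div_sq hr hr1, indicator_of_mem (mem_Iic.mpr hv1),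
      if_neg (by linarith), if_neg (not_lt.mpr hv1), div_one, Pi.one_apply, mul_one,
      ← ENNReal.ofReal_add (by linarith) hr.le, sub_add_cancel]

lemma eq_isoMeasure_of_Iic (hr : 0 < r) (hr1 : r ≤ 1) (ν : Measure ℝ) [IsFiniteMeasure ν]
    (hν : ∀ v, ν (Iic v) = ENNReal.ofReal (isoCDF r v)) : ν = isoMeasure r :=
  Measure.ext_of_Iic _ _ fun v => by rw [hν, isoMeasure_Iic hr hr1]

lemma ae_isoMeasure_mem_Icc (hr1 : r ≤ 1) : ∀ᵐ t ∂isoMeasure r, t ∈ Icc r 1 := by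
  rw [isoMeasure, ae_add_measure_iff]
  refine ⟨(withDensity_absolutelyContinuous _ _).ae_le ?_, Measure.ae_smul_measure ?_ _⟩
  · filter_upwards [ae_restrict_mem measurableSet_Ioc] with t ht using Ioc_subset_Icc_self ht
  · exact (ae_dirac_iff measurableSet_Icc).mpr ⟨hr1, le_rfl⟩

lemma isProbabilityMeasure_isoMeasure (hr : 0 < r) (hr1 : r ≤ 1) :
    IsProbabilityMeasure (isoMeasure r) := by
  have hnull : isoMeasure r (Iic 1)ᶜ = 0 := by
    refine measure_eq_zero_iff_ae_notMem.mpr ?_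
    filter_upwards [ae_isoMeasure_mem_Icc hr1] with t ht using not_not.mpr ht.2
  constructor
  rw [← measure_add_measure_compl measurableSet_Iic (s := Iic 1), hnull, add_zero,
    isoMeasure_Iic hr hr1, isoCDF, if_neg (by linarith), if_neg (lt_irrefl 1), ENNReal.ofReal_one]

lemma integrable_isoMeasure (hr : 0 < r) {g : ℝ → ℝ} (hg : IntegrableOn g (Icc r 1)) :
    Integrable g (isoMeasure r) := by
  refine .add_measure ?_ ((integrable_dirac (by simp)).smul_measure ENNReal.ofReal_ne_top)
  change Integrable g
    ((volume.restrict (Ioc r 1)).withDensity fun t => ((r / t ^ 2).toNNReal : ℝ≥0∞))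
  rw [integrable_withDensity_iff_integrable_smul (by fun_prop)]
  have hcont : ContinuousOn (fun t => r / t ^ 2) (Icc r 1) :=
    continuousOn_const.div (continuousOn_pow 2) fun t ht => pow_ne_zero 2 (hr.trans_le ht.1).ne'
  refine ((hg.continuousOn_mul hcont isCompact_Icc).mono_set Ioc_subset_Icc_self).congr_fun
    (fun t ht => ?_) measurableSet_Ioc
  simp [NNReal.smul_def, Real.coe_toNNReal _ (by positivity : 0 ≤ r / t ^ 2)]

lemma integral_isoMeasure (hr : 0 < r) (hr1 : r ≤ 1) {g : ℝ → ℝ} (hg : IntegrableOn g (Icc r 1)) :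
    ∫ t, g t ∂isoMeasure r = (∫ t in r..1, r / t ^ 2 * g t) + r * g 1 := by
  have h := integrable_isoMeasure hr hg
  rw [isoMeasure, integral_add_measure (h.mono_measure (Measure.le_add_right le_rfl))
    (h.mono_measure (Measure.le_add_left le_rfl)), integral_smul_measure, integral_dirac,
    ENNReal.toReal_ofReal hr.le, smul_eq_mul, intervalIntegral.integral_of_le hr1]
  change ∫ t, g t ∂(volume.restrict (Ioc r 1)).withDensity
    (fun t => ((r / t ^ 2).toNNReal : ℝ≥0∞)) + _ = _
  rw [integral_withDensity_eq_integral_smul (by fun_prop)]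
  congr 1
  refine setIntegral_congr_fun measurableSet_Ioc fun t ht => ?_
  simp [NNReal.smul_def, Real.coe_toNNReal _ (by positivity : 0 ≤ r / t ^ 2)]

lemma integral_id_isoMeasure (hr : 0 < r) (hr1 : r ≤ 1) :
    ∫ t, t ∂isoMeasure r = r * (1 - log r) := by
  rw [integral_isoMeasure hr hr1 (g := fun t => t) continuous_id.integrableOn_Icc]
  have h : ∫ t in r..1, r / t ^ 2 * t = ∫ t in r..1, r * t⁻¹ := by
    refine intervalIntegral.integral_congr fun t ht => ?_
    have : t ≠ 0 := (hr.trans_le (uIcc_of_le hr1 ▸ ht).1).ne'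
    field_simp
  rw [h, intervalIntegral.integral_const_mul, integral_inv_of_pos hr one_pos, one_div,
    Real.log_inv]
  ring

/-- `u` is differentiable almost everywhere with `u' = X` (by Lipschitz continuity and
`deriv_eq_of_forall_add_mul_le`), and the integrand is `(u t / t)'`. -/
lemma integral_sub_div_sq_of_forall_add_mul_le {u X : ℝ → ℝ} {a b : ℝ} (ha : 0 < a) (hab : a ≤ b)
    (hX : ∀ t ∈ Icc a b, X t ∈ Icc 0 1)
    (hsupport : ∀ s ∈ Icc a b, ∀ t ∈ Icc a b, u t + (s - t) * X t ≤ u s) :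
    ∫ t in a..b, (t * X t - u t) / t ^ 2 = u b / b - u a / a := by
  have hlip : LipschitzOnWith 1 u (uIcc a b) := by
    rw [uIcc_of_le hab]
    refine LipschitzOnWith.of_le_add_mul 1 fun s hs t ht => ?_
    have h1 := hsupport t ht s hs
    have h2 : (s - t) * X s ≤ dist s t :=
      (mul_le_of_le_one_right (abs_nonneg _) (hX s hs).2).trans' <|
        mul_le_mul_of_nonneg_right (le_abs_self _) (hX s hs).1
    simp only [NNReal.coe_one, one_mul]
    linarith
  set f : ℝ → ℝ := fun t => u t * t⁻¹ with hf_def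
  have hf : AbsolutelyContinuousOnInterval f a b := by
    refine hlip.absolutelyContinuousOnInterval.mul (ContDiffOn.absolutelyContinuousOnInterval ?_)
    exact contDiffOn_id.inv fun t ht => (ha.trans_le (uIcc_of_le hab ▸ ht).1).ne'
  have hderiv : ∀ᵐ t, t ∈ Ι a b → deriv f t = (t * X t - u t) / t ^ 2 := by
    filter_upwards [hlip.absolutelyContinuousOnInterval.ae_differentiableAt,
      Measure.ae_ne volume b] with t hdiff htb ht
    rw [uIoc_of_le hab] at ht
    have hdu := hdiff (uIcc_of_le hab ▸ Ioc_subset_Icc_self ht)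
    have hut : deriv u t = X t := by
      refine deriv_eq_of_forall_add_mul_le hdu ?_
      filter_upwards [Icc_mem_nhds ht.1 (lt_of_le_of_ne ht.2 htb)] with s hs
      exact hsupport s hs t (Ioc_subset_Icc_self ht)
    have ht0 : t ≠ 0 := (ha.trans ht.1).ne'
    have hfd : HasDerivAt f (X t * t⁻¹ + u t * -(t ^ 2)⁻¹) t :=
      (hut ▸ hdu.hasDerivAt).mul (hasDerivAt_inv ht0)
    rw [hfd.deriv]
    field_simp
    ring
  rw [← intervalIntegral.integral_congr_ae hderiv, hf.integral_deriv_eq_sub, hf_def]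
  simp only [div_eq_mul_inv]

/-- `X` and `q` are the allocation and payment rules of a truthful single-buyer mechanism. With
`u t = t * X t - q t` the buyer's utility, `q t / t ^ 2 = (u t / t)'` almost everywhere, so the
revenue telescopes to `r * X 1 - u r`. -/
theorem integral_isoMeasure_le_of_incentiveCompatible (hr : 0 < r) (hr1 : r ≤ 1)
    {X q : ℝ → ℝ} (hq : IntegrableOn q (Icc r 1)) (hX : ∀ t ∈ Icc r 1, X t ∈ Icc 0 1)
    (hIR : q r ≤ r * X r) (hIC : ∀ s ∈ Icc r 1, ∀ t ∈ Icc r 1, s * X t - q t ≤ s * X s - q s) :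
    ∫ t, q t ∂isoMeasure r ≤ r := by
  set u : ℝ → ℝ := fun t => t * X t - q t with hu_def
  have hsupport : ∀ s ∈ Icc r 1, ∀ t ∈ Icc r 1, u t + (s - t) * X t ≤ u s := by
    intro s hs t ht
    have := hIC s hs t ht
    simp only [hu_def]
    linarith
  have hdensity : ∫ t in r..1, r / t ^ 2 * q t = r * (u 1 / 1 - u r / r) := by
    rw [← integral_sub_div_sq_of_forall_add_mul_le hr hr1 hX hsupport,
      ← intervalIntegral.integral_const_mul]
    congr 1 with t
    simp only [hu_def]
    ring
  rw [integral_isoMeasure hr hr1 hq, hdensity]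
  have := mul_le_of_le_one_right hr.le (hX 1 ⟨hr1, le_rfl⟩).2
  simp only [hu_def]
  field_simp
  linarith

end Isorevenue

section Regret

variable {n : ℕ}

lemma le_top1 (v : Fin n → ℝ) (j : Fin n) : v j ≤ top1 v :=
  le_ciSup (finite_range v).bddAbove j

lemma top1_eq_of_forall_le {v : Fin n → ℝ} {i : Fin n} (h : ∀ j, v j ≤ v i) : top1 v = v i :=
  have : Nonempty (Fin n) := ⟨i⟩
  le_antisymm (ciSup_le h) (le_top1 v i)

lemma measurable_top1 : Measurable (top1 : (Fin n → ℝ) → ℝ) :=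
  Measurable.iSup fun i => measurable_pi_apply i

lemma abs_top1_le_one {v : Fin n → ℝ} (hv : v ∈ Icc 0 1) : |top1 v| ≤ 1 :=
  abs_le.mpr ⟨(neg_nonpos.mpr zero_le_one).trans (Real.iSup_nonneg fun i => hv.1 i),
    Real.iSup_le (fun i => hv.2 i) zero_le_one⟩

lemma top1_single (k : Fin n) {t : ℝ} (ht : 0 ≤ t) : top1 (Pi.single k t : Fin n → ℝ) = t := by
  rw [top1_eq_of_forall_le (i := k), Pi.single_eq_same]
  intro j
  rcases eq_or_ne j k with rfl | hj
  · exact le_rfl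
  · simpa [hj] using ht

lemma single_mem_Icc_iff {k : Fin n} {t : ℝ} :
    (Pi.single k t : Fin n → ℝ) ∈ Icc 0 1 ↔ t ∈ Icc 0 1 := by
  refine ⟨fun h => ⟨by simpa using h.1 k, by simpa using h.2 k⟩, fun h => ⟨?_, fun j => ?_⟩⟩
  · exact Pi.single_nonneg.mpr h.1
  · rcases eq_or_ne j k with rfl | hj
    · simpa using h.2
    · simp [hj]

lemma measurable_single (k : Fin n) : Measurable fun t : ℝ => (Pi.single k t : Fin n → ℝ) :=
  (continuous_single k).measurable

lemma measurable_regret {p : (Fin n → ℝ) → Fin n → ℝ} (hp : Measurable p) :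
    Measurable fun v => top1 v - ∑ i, p v i :=
  measurable_top1.sub (Finset.measurable_sum _ fun i _ => (measurable_pi_apply i).comp hp)

lemma exists_abs_regret_le {p : (Fin n → ℝ) → Fin n → ℝ} (hp : ∃ C, ∀ v i, |p v i| ≤ C) :
    ∃ B, 0 ≤ B ∧ ∀ v ∈ Icc (0 : Fin n → ℝ) 1, |top1 v - ∑ i, p v i| ≤ B := by
  obtain ⟨C, hC⟩ := hp
  refine ⟨1 + n * |C|, by positivity, fun v hv => ?_⟩
  calc |top1 v - ∑ i, p v i| ≤ |top1 v| + ∑ i, |p v i| :=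
        (abs_sub _ _).trans (add_le_add le_rfl (Finset.abs_sum_le_sum_abs _ _))
    _ ≤ 1 + ∑ _i : Fin n, |C| := add_le_add (abs_top1_le_one hv)
        (Finset.sum_le_sum fun i _ => (hC v i).trans (le_abs_self C))
    _ = 1 + n * |C| := by simp

variable {x p : (Fin n → ℝ) → Fin n → ℝ}

lemma DSIC.alloc_le_one (hD : DSIC n x p) {v : Fin n → ℝ} (hv : v ∈ Icc 0 1) (i : Fin n) :
    x v i ≤ 1 :=
  (Finset.single_le_sum (fun j _ => ((hD.2.2.2 v hv).2 j).1) (Finset.mem_univ i)).trans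
    (hD.2.2.2 v hv).1

lemma DSIC.payment_nonpos (hD : DSIC n x p) {v : Fin n → ℝ} (hv : v ∈ Icc 0 1) {i : Fin n}
    (hvi : v i = 0) : p v i ≤ 0 := by
  have := ((hD.2.2.2 v hv).2 i).2.1
  rw [hvi, zero_mul] at this
  linarith

lemma DSIC.sum_payment_single_le (hD : DSIC n x p) (k : Fin n) {t : ℝ} (ht : t ∈ Icc 0 1) :
    ∑ i, p (Pi.single k t) i ≤ p (Pi.single k t) k := by
  rw [← Finset.add_sum_erase _ _ (Finset.mem_univ k), add_le_iff_nonpos_right]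
  refine Finset.sum_nonpos fun i hi => hD.payment_nonpos (single_mem_Icc_iff.mpr ht) ?_
  simp [Finset.ne_of_mem_erase hi]

/-- `r * (1 - log r)` is the mean of `F_r`. -/
lemma DSIC.le_integral_regret_single (hD : DSIC n x p) (k : Fin n) {r : ℝ} (hr : 0 < r)
    (hr1 : r ≤ 1) :
    r * (1 - log r) - r ≤
      ∫ t, (top1 (Pi.single k t : Fin n → ℝ) - ∑ i, p (Pi.single k t) i) ∂isoMeasure r := by
  have ⟨_, hpm, ⟨C, hC⟩, hcond⟩ := hD
  have hmem : ∀ t ∈ Icc r 1, (Pi.single k t : Fin n → ℝ) ∈ Icc 0 1 :=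
    fun t ht => single_mem_Icc_iff.mpr ⟨hr.le.trans ht.1, ht.2⟩
  have hq : IntegrableOn (fun t => p (Pi.single k t) k) (Icc r 1) :=
    Measure.integrableOn_of_bounded (by simp) (((measurable_pi_apply k).comp hpm).comp
      (measurable_single k)).aestronglyMeasurable (M := C) (ae_of_all _ fun t => hC _ k)
  have hrevenue : ∫ t, p (Pi.single k t) k ∂isoMeasure r ≤ r := by
    refine integral_isoMeasure_le_of_incentiveCompatible hr hr1 hq
      (fun t ht => ⟨((hcond _ (hmem t ht)).2 k).1, hD.alloc_le_one (hmem t ht) k⟩) ?_ ?_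
    · simpa using ((hcond _ (hmem r ⟨le_rfl, hr1⟩)).2 k).2.1
    · intro s hs t ht
      simpa [Pi.single, Function.update_idem] using
        ((hcond _ (hmem s hs)).2 k).2.2 t ⟨hr.le.trans ht.1, ht.2⟩
  obtain ⟨B, -, hB⟩ := exists_abs_regret_le ⟨C, hC⟩
  have hregret : Integrable (fun t => top1 (Pi.single k t : Fin n → ℝ) - ∑ i, p (Pi.single k t) i)
      (isoMeasure r) :=
    integrable_isoMeasure hr <| Measure.integrableOn_of_bounded (by simp)
      ((measurable_regret hpm).comp (measurable_single k)).aestronglyMeasurable (M := B)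
      ((ae_restrict_iff' measurableSet_Icc).mpr (ae_of_all _ fun t ht => hB _ (hmem t ht)))
  have hid := integrable_isoMeasure hr (g := fun t => t) continuous_id.integrableOn_Icc
  calc r * (1 - log r) - r ≤ ∫ t, t ∂isoMeasure r - ∫ t, p (Pi.single k t) k ∂isoMeasure r := by
        rw [integral_id_isoMeasure hr hr1]; linarith
    _ = ∫ t, (t - p (Pi.single k t) k) ∂isoMeasure r :=
        (integral_sub hid (integrable_isoMeasure hr hq)).symm
    _ ≤ _ := by
        refine integral_mono_ae (hid.sub (integrable_isoMeasure hr hq)) hregret ?_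
        filter_upwards [ae_isoMeasure_mem_Icc hr1] with t ht
        have ht0 : t ∈ Icc 0 1 := ⟨hr.le.trans ht.1, ht.2⟩
        simp only [top1_single k ht0.1]
        linarith [hD.sum_payment_single_le k ht0]

theorem DSIC.le_mechRegret_uniform_single (hD : DSIC n x p) (hn : n ≠ 0) {r : ℝ} (hr : 0 < r)
    (hr1 : r ≤ 1) :
    r * (1 - log r) - r ≤
      mechRegret n p ((n : ℝ≥0∞)⁻¹ • ∑ k, Measure.map (fun t => Pi.single k t) (isoMeasure r)) := by
  have := isProbabilityMeasure_isoMeasure hr hr1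
  obtain ⟨B, -, hB⟩ := exists_abs_regret_le hD.2.2.1
  have hmeas := measurable_regret hD.2.1
  refine le_setIntegral_uniform_mixture hn measurableSet_Icc (fun k => ?_) (fun k => ?_)
  · have := Measure.isProbabilityMeasure_map (measurable_single k).aemeasurable
      (μ := isoMeasure r)
    exact Measure.integrableOn_of_bounded (measure_ne_top _ _) hmeas.aestronglyMeasurable (M := B)
      ((ae_restrict_iff' measurableSet_Icc).mpr (ae_of_all _ hB))
  · have hpre : (fun t : ℝ => (Pi.single k t : Fin n → ℝ)) ⁻¹' Icc 0 1 = Icc 0 1 :=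
      ext fun t => single_mem_Icc_iff
    rw [setIntegral_map measurableSet_Icc hmeas.aestronglyMeasurable
      (measurable_single k).aemeasurable, hpre, Measure.restrict_eq_self_of_ae_mem]
    · exact hD.le_integral_regret_single k hr hr1
    · filter_upwards [ae_isoMeasure_mem_Icc hr1] with t ht using ⟨hr.le.trans ht.1, ht.2⟩

lemma exchangeable_uniform_single (μ : Measure ℝ) :
    Exchangeable n ((n : ℝ≥0∞)⁻¹ • ∑ k, Measure.map (fun t => (Pi.single k t : Fin n → ℝ)) μ) := by
  intro σ
  have hperm : Measurable fun v : Fin n → ℝ => fun i => v (σ i) :=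
    measurable_pi_lambda _ fun i => measurable_pi_apply _
  have hcomp (k : Fin n) :
      (fun v : Fin n → ℝ => fun i => v (σ i)) ∘ (fun t : ℝ => (Pi.single k t : Fin n → ℝ)) =
        fun t => (Pi.single (σ.symm k) t : Fin n → ℝ) :=
    funext fun t => Pi.single_comp_equiv σ k t
  rw [Measure.map_smul, Measure.map_finset_sum' hperm.aemeasurable]
  congr 1
  simp_rw [Measure.map_map hperm (measurable_single _), hcomp]
  exact Equiv.sum_comp σ.symm (fun k => Measure.map (fun t => Pi.single k t) μ)

lemma uniform_single_mem_exchClass (hn : n ≠ 0) (μ : Measure ℝ) [IsProbabilityMeasure μ]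
    (hμ : ∀ᵐ t ∂μ, t ∈ Icc 0 1) :
    (n : ℝ≥0∞)⁻¹ • ∑ k, Measure.map (fun t => (Pi.single k t : Fin n → ℝ)) μ ∈ exchClass n := by
  refine ⟨⟨uniform_mixture_apply_eq_one hn fun k => ?_⟩,
    uniform_mixture_apply_eq_one hn fun k => ?_, exchangeable_uniform_single μ⟩
  · rw [Measure.map_apply (measurable_single k) MeasurableSet.univ, preimage_univ,
      measure_univ]
  · rw [Measure.map_apply (measurable_single k) measurableSet_Icc,
      show (fun t : ℝ => (Pi.single k t : Fin n → ℝ)) ⁻¹' Icc 0 1 = Icc 0 1 from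
        ext fun t => single_mem_Icc_iff,
      ← prob_compl_eq_zero_iff measurableSet_Icc, measure_eq_zero_iff_ae_notMem]
    filter_upwards [hμ] with t ht using not_not.mpr ht

end Regret

def clampE (t : ℝ) : ℝ := max (exp (-1)) (min t 1)

/-- The distribution function `1 + log p` on `[e⁻¹, 1]` of the random reserve price below. -/
def allocE (t : ℝ) : ℝ := log (clampE t) + 1

lemma exp_neg_one_le_clampE (t : ℝ) : exp (-1) ≤ clampE t := le_max_left _ _

lemma clampE_pos (t : ℝ) : 0 < clampE t := (exp_pos _).trans_le (exp_neg_one_le_clampE t)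

lemma clampE_le_one (t : ℝ) : clampE t ≤ 1 :=
  max_le (exp_le_one_iff.mpr (by norm_num)) (min_le_right _ _)

lemma le_clampE {t : ℝ} (ht : t ≤ 1) : t ≤ clampE t := by
  rw [clampE, min_eq_left ht]
  exact le_max_right _ _

lemma clampE_mono : Monotone clampE := fun _ _ h => max_le_max le_rfl (min_le_min h le_rfl)

lemma continuous_clampE : Continuous clampE := by
  unfold clampE
  fun_prop

lemma continuous_allocE : Continuous allocE :=
  (continuous_clampE.log fun t => (clampE_pos t).ne').add continuous_const

lemma allocE_nonneg (t : ℝ) : 0 ≤ allocE t := by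
  have := log_le_log (exp_pos _) (exp_neg_one_le_clampE t)
  rw [log_exp] at this
  unfold allocE
  linarith

lemma allocE_le_one (t : ℝ) : allocE t ≤ 1 := by
  have := log_nonpos (clampE_pos t).le (clampE_le_one t)
  unfold allocE
  linarith

lemma clampE_mul_log_mono {s t : ℝ} (h : s ≤ t) :
    clampE s * log (clampE s) ≤ clampE t * log (clampE t) :=
  mul_log_strictMonoOn.monotoneOn (exp_neg_one_le_clampE s) (exp_neg_one_le_clampE t)
    (clampE_mono h)

lemma neg_exp_neg_one_le_clampE_mul_log (t : ℝ) : -exp (-1) ≤ clampE t * log (clampE t) := by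
  have := mul_log_strictMonoOn.monotoneOn (mem_Ici.mpr le_rfl) (exp_neg_one_le_clampE t)
    (exp_neg_one_le_clampE t)
  simpa [log_exp] using this

lemma mul_allocE_self_sub_clampE {a : ℝ} (ha : a ≤ 1) :
    a * allocE a - clampE a = clampE a * log (clampE a) := by
  rcases le_or_gt a (exp (-1)) with h | h
  · have hc : clampE a = exp (-1) := by rw [clampE, min_eq_left ha, max_eq_left h]
    simp [allocE, hc, log_exp]
  · have hc : clampE a = a := by rw [clampE, min_eq_left ha, max_eq_right h.le]
    rw [allocE, hc]
    ring

/-- This is `log y ≤ y - 1` at `y = clampE w / clampE b`. -/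
lemma mul_allocE_sub_clampE_le {a b : ℝ} (hab : a ≤ b) (hb : b ≤ 1) (w : ℝ) :
    a * allocE w - clampE w ≤ clampE b * log (clampE b) := by
  have hc := clampE_pos b
  have hlog := log_le_sub_one_of_pos (div_pos (clampE_pos w) hc)
  rw [log_div (clampE_pos w).ne' hc.ne'] at hlog
  have : a * allocE w ≤ clampE b * allocE w :=
    mul_le_mul_of_nonneg_right (hab.trans (le_clampE hb)) (allocE_nonneg w)
  have : clampE b * (log (clampE w) - log (clampE b)) ≤ clampE w - clampE b :=
    calc _ ≤ clampE b * (clampE w / clampE b - 1) := by gcongr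
      _ = _ := by field_simp
  unfold allocE at *
  linarith

section Mechanism

variable {n : ℕ}

def IsWinner (i : Fin n) (v : Fin n → ℝ) : Prop := (∀ j, v j ≤ v i) ∧ ∀ j < i, v j < v i

def maxOther (i : Fin n) (v : Fin n → ℝ) : ℝ := top1 (Function.update v i 0)

open Classical in
/-- Second-price auction with a random reserve price `R` distributed by `allocE`: the highest bidder
`i` wins iff `R ≤ v i` and then pays `max R (maxOther i v)`. `reserveAlloc` and `reservePay` are
the expectations over `R`. -/
def reserveAlloc (v : Fin n → ℝ) (i : Fin n) : ℝ := if IsWinner i v then allocE (v i) else 0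

open Classical in
def reservePay (v : Fin n → ℝ) (i : Fin n) : ℝ :=
  if IsWinner i v then clampE (v i) + clampE (maxOther i v) * log (clampE (maxOther i v)) else 0

lemma IsWinner.eq {i j : Fin n} {v : Fin n → ℝ} (hi : IsWinner i v) (hj : IsWinner j v) :
    i = j := by
  by_contra h
  rcases lt_or_gt_of_ne h with h | h
  · exact (hj.2 i h).not_ge (hi.1 j)
  · exact (hi.2 j h).not_ge (hj.1 i)

lemma exists_isWinner [Nonempty (Fin n)] (v : Fin n → ℝ) : ∃ i, IsWinner i v := by
  obtain ⟨i₀, hi₀⟩ := Finite.exists_max v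
  obtain ⟨i, hi, hmin⟩ := WellFounded.has_min wellFounded_lt {i | ∀ j, v j ≤ v i} ⟨i₀, hi₀⟩
  refine ⟨i, hi, fun j hj => ?_⟩
  obtain ⟨k, hk⟩ : ∃ k, v j < v k := by
    by_contra! h
    exact hmin j h hj
  exact hk.trans_le (hi k)

lemma measurableSet_isWinner (i : Fin n) : MeasurableSet {v : Fin n → ℝ | IsWinner i v} := by
  simp only [IsWinner, ofPred_and, ofPred_forall]
  exact .inter (.iInter fun j => measurableSet_le (measurable_pi_apply j) (measurable_pi_apply i))
    (.iInter fun j => .iInter fun _ =>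
      measurableSet_lt (measurable_pi_apply j) (measurable_pi_apply i))

lemma sum_eq_of_isWinner {v : Fin n → ℝ} {i : Fin n} (hi : IsWinner i v) {a : Fin n → ℝ}
    (ha : ∀ j, ¬IsWinner j v → a j = 0) : ∑ j, a j = a i :=
  Finset.sum_eq_single i (fun j _ hj => ha j fun h => hj (h.eq hi)) (by simp)

lemma le_maxOther {i j : Fin n} (hj : j ≠ i) (v : Fin n → ℝ) : v j ≤ maxOther i v := by
  unfold maxOther
  simpa [hj] using le_top1 (Function.update v i 0) j

lemma maxOther_le {i : Fin n} {v : Fin n → ℝ} {b : ℝ} (hb : 0 ≤ b) (h : ∀ j ≠ i, v j ≤ b) :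
    maxOther i v ≤ b := by
  have : Nonempty (Fin n) := ⟨i⟩
  refine ciSup_le fun j => ?_
  rcases eq_or_ne j i with rfl | hj
  · simpa using hb
  · simpa [hj] using h j hj

lemma maxOther_update (i : Fin n) (v : Fin n → ℝ) (w : ℝ) :
    maxOther i (Function.update v i w) = maxOther i v := by
  simp [maxOther]

lemma measurable_maxOther (i : Fin n) : Measurable (maxOther i) :=
  measurable_top1.comp (measurable_update' (a := i) |>.comp (measurable_id.prodMk measurable_const))

lemma le_maxOther_of_not_isWinner {i : Fin n} {v : Fin n → ℝ} (h : ¬IsWinner i v) :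
    v i ≤ maxOther i v := by
  simp only [IsWinner, not_and_or, not_forall, not_le, not_lt] at h
  rcases h with ⟨j, hj⟩ | ⟨j, hji, hj⟩
  · exact hj.le.trans (le_maxOther (fun h => (h ▸ hj).false) v)
  · exact hj.trans (le_maxOther hji.ne v)

lemma maxOther_le_of_isWinner {i : Fin n} {v : Fin n → ℝ} (hv : 0 ≤ v i) (h : IsWinner i v) :
    maxOther i v ≤ v i :=
  maxOther_le hv fun j _ => h.1 j

lemma measurable_reserveAlloc : Measurable (reserveAlloc (n := n)) :=
  measurable_pi_lambda _ fun i => Measurable.ite (measurableSet_isWinner i)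
    (continuous_allocE.measurable.comp (measurable_pi_apply i)) measurable_const

lemma measurable_reservePay : Measurable (reservePay (n := n)) := by
  refine measurable_pi_lambda _ fun i =>
    Measurable.ite (measurableSet_isWinner i) ?_ measurable_const
  have hc := continuous_clampE.measurable
  have hm := hc.comp (measurable_maxOther i)
  exact (hc.comp (measurable_pi_apply i)).add (hm.mul (measurable_log.comp hm))

lemma abs_reservePay_le_one (v : Fin n → ℝ) (i : Fin n) : |reservePay v i| ≤ 1 := by
  unfold reservePay
  split_ifs
  · have := mul_nonpos_of_nonneg_of_nonpos (clampE_pos (maxOther i v)).le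
      (log_nonpos (clampE_pos _).le (clampE_le_one (maxOther i v)))
    refine abs_le.mpr ⟨?_, by linarith [clampE_le_one (v i)]⟩
    linarith [exp_neg_one_le_clampE (v i), neg_exp_neg_one_le_clampE_mul_log (maxOther i v)]
  · simp

open Classical in
lemma mul_reserveAlloc_sub_reservePay (v : Fin n → ℝ) (i : Fin n) (a : ℝ) :
    a * reserveAlloc v i - reservePay v i = if IsWinner i v then
      a * allocE (v i) - clampE (v i) - clampE (maxOther i v) * log (clampE (maxOther i v))
    else 0 := by
  unfold reserveAlloc reservePay
  split_ifs <;> ring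

lemma reserve_utility_nonneg {v : Fin n → ℝ} (hv : v ∈ Icc 0 1) (i : Fin n) :
    0 ≤ v i * reserveAlloc v i - reservePay v i := by
  rw [mul_reserveAlloc_sub_reservePay]
  split_ifs with h
  · rw [mul_allocE_self_sub_clampE (hv.2 i)]
    linarith [clampE_mul_log_mono (maxOther_le_of_isWinner (hv.1 i) h)]
  · exact le_rfl

lemma reserve_utility_update_le {v : Fin n → ℝ} (hv : v ∈ Icc 0 1) (i : Fin n) (w : ℝ) :
    v i * reserveAlloc (Function.update v i w) i - reservePay (Function.update v i w) i ≤
      v i * reserveAlloc v i - reservePay v i := by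
  rw [mul_reserveAlloc_sub_reservePay, maxOther_update, Function.update_self]
  split_ifs with hw
  · rw [mul_reserveAlloc_sub_reservePay]
    split_ifs with h
    · linarith [mul_allocE_sub_clampE_le le_rfl (hv.2 i) w, mul_allocE_self_sub_clampE (hv.2 i)]
    · linarith [mul_allocE_sub_clampE_le (le_maxOther_of_not_isWinner h)
        (maxOther_le zero_le_one fun j _ => hv.2 j) w]
  · exact reserve_utility_nonneg hv i

theorem dsic_reserve : DSIC n reserveAlloc reservePay := by
  refine ⟨measurable_reserveAlloc, measurable_reservePay, ⟨1, abs_reservePay_le_one⟩,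
    fun v hv => ⟨?_, fun i => ⟨?_, reserve_utility_nonneg hv i,
      fun w _ => reserve_utility_update_le hv i w⟩⟩⟩
  · by_cases h : ∃ i, IsWinner i v
    · obtain ⟨i, hi⟩ := h
      rw [sum_eq_of_isWinner hi (a := reserveAlloc v) fun j hj => if_neg hj, reserveAlloc,
        if_pos hi]
      exact allocE_le_one _
    · simp [reserveAlloc, not_exists.mp h]
  · unfold reserveAlloc
    split_ifs
    exacts [allocE_nonneg _, le_rfl]

lemma regret_reserve_le {v : Fin n → ℝ} (hv : v ∈ Icc 0 1) :
    top1 v - ∑ i, reservePay v i ≤ exp (-1) := by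
  rcases isEmpty_or_nonempty (Fin n) with hn | hn
  · simp [top1, (exp_pos _).le]
  obtain ⟨i, hi⟩ := exists_isWinner v
  rw [top1_eq_of_forall_le hi.1, sum_eq_of_isWinner hi (a := reservePay v) fun j hj => if_neg hj,
    reservePay, if_pos hi]
  linarith [le_clampE (hv.2 i), neg_exp_neg_one_le_clampE_mul_log (maxOther i v)]

end Mechanism

section Minimax

variable {n : ℕ}

lemma mechRegret_le_of_forall_le {p : (Fin n → ℝ) → Fin n → ℝ} {B : ℝ} (hB : 0 ≤ B)
    (h : ∀ v ∈ Icc (0 : Fin n → ℝ) 1, top1 v - ∑ i, p v i ≤ B) (G : Measure (Fin n → ℝ))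
    [IsProbabilityMeasure G] : mechRegret n p G ≤ B := by
  by_cases hint : IntegrableOn (fun v => top1 v - ∑ i, p v i) (Icc 0 1) G
  · calc mechRegret n p G ≤ ∫ _ in Icc (0 : Fin n → ℝ) 1, B ∂G :=
          setIntegral_mono_on hint (integrableOn_const (measure_ne_top _ _)) measurableSet_Icc h
      _ = G.real (Icc 0 1) * B := by rw [setIntegral_const, smul_eq_mul]
      _ ≤ B := mul_le_of_le_one_left hB measureReal_le_one
  · rw [mechRegret, integral_undef hint]
    exact hB

theorem minimaxRegret_eq_of_saddle {C : Set (Measure (Fin n → ℝ))} (hC : C ⊆ allClass n)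
    {G : Measure (Fin n → ℝ)} (hG : G ∈ C) {x₀ p₀ : (Fin n → ℝ) → Fin n → ℝ}
    (h₀ : DSIC n x₀ p₀) {c : ℝ} (hc : 0 ≤ c)
    (hup : ∀ v ∈ Icc (0 : Fin n → ℝ) 1, top1 v - ∑ i, p₀ v i ≤ c)
    (hlow : ∀ x p, DSIC n x p → c ≤ mechRegret n p G) :
    minimaxRegret n C = c := by
  have hregret_le {p : (Fin n → ℝ) → Fin n → ℝ} {B : ℝ} (hB0 : 0 ≤ B)
      (hB : ∀ v ∈ Icc (0 : Fin n → ℝ) 1, top1 v - ∑ i, p v i ≤ B) :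
      ∀ w ∈ {w | ∃ G ∈ C, w = mechRegret n p G}, w ≤ B := by
    rintro _ ⟨G', hG', rfl⟩
    have := (hC hG').1
    exact mechRegret_le_of_forall_le hB0 hB G'
  have hlower : ∀ w ∈ {w | ∃ x p, DSIC n x p ∧ w = worstCase n p C}, c ≤ w := by
    rintro _ ⟨x, p, hD, rfl⟩
    obtain ⟨B, hB0, hB⟩ := exists_abs_regret_le hD.2.2.1
    have hbdd := hregret_le hB0 fun v hv => (le_abs_self _).trans (hB v hv)
    exact (hlow x p hD).trans (le_csSup ⟨B, hbdd⟩ ⟨G, hG, rfl⟩)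
  have hmem : worstCase n p₀ C ∈ {w | ∃ x p, DSIC n x p ∧ w = worstCase n p C} :=
    ⟨x₀, p₀, h₀, rfl⟩
  have hupper : worstCase n p₀ C ≤ c := Real.sSup_le (hregret_le hc hup) hc
  exact le_antisymm ((csInf_le ⟨c, hlower⟩ hmem).trans hupper) (le_csInf ⟨_, hmem⟩ hlower)

end Minimax

/-- let `F*` be the uniform mixture over `k` of the distributions under
which all coordinates other than `k` are `0` and coordinate `k` is isorevenue with
parameter `1/e`. Then every DSIC mechanism has regret at least `1/e` against `F*`;
hence (since `F*` is exchangeable) the minimax regret over all distributions on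
`[0,1]^n`, and over all exchangeable distributions, equals `1/e`. -/
theorem stmt16 (n : ℕ) (hn : 1 ≤ n)
    (ν : Measure ℝ) [IsProbabilityMeasure ν]
    (hν : ∀ v : ℝ, ν (Set.Iic v) = ENNReal.ofReal (isoCDF (Real.exp (-1)) v)) :
    (∀ x p : (Fin n → ℝ) → Fin n → ℝ, DSIC n x p →
      Real.exp (-1) ≤ mechRegret n p
        ((n : ℝ≥0∞)⁻¹ •
          ∑ k : Fin n, Measure.map (fun t : ℝ => fun i : Fin n => if i = k then t else 0) ν)) ∧
    minimaxRegret n (allClass n) = Real.exp (-1) ∧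
    minimaxRegret n (exchClass n) = Real.exp (-1) := by
  have hr : 0 < exp (-1) := exp_pos _
  have hr1 : exp (-1) ≤ 1 := exp_le_one_iff.mpr (by norm_num)
  have hn0 : n ≠ 0 := by omega
  have hsingle (k : Fin n) : (fun t : ℝ => fun i : Fin n => if i = k then t else 0) =
      fun t => (Pi.single k t : Fin n → ℝ) :=
    funext fun t => funext fun i => (Pi.single_apply k t i).symm
  simp_rw [hsingle]
  obtain rfl := eq_isoMeasure_of_Iic hr hr1 ν hν
  have hlow (x p : (Fin n → ℝ) → Fin n → ℝ) (hD : DSIC n x p) : exp (-1) ≤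
      mechRegret n p ((n : ℝ≥0∞)⁻¹ • ∑ k, Measure.map (fun t => Pi.single k t)
        (isoMeasure (exp (-1)))) := by
    convert hD.le_mechRegret_uniform_single hn0 hr hr1 using 1
    rw [log_exp]
    ring
  have hF := uniform_single_mem_exchClass hn0 (isoMeasure (exp (-1)))
    ((ae_isoMeasure_mem_Icc hr1).mono fun t ht => ⟨hr.le.trans ht.1, ht.2⟩)
  have hsub : exchClass n ⊆ allClass n := fun _ h => ⟨h.1, h.2.1⟩
  exact ⟨hlow, minimaxRegret_eq_of_saddle subset_rfl (hsub hF) dsic_reserve hr.le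
    (fun v hv => regret_reserve_le hv) hlow, minimaxRegret_eq_of_saddle hsub hF dsic_reserve hr.le
    (fun v hv => regret_reserve_le hv) hlow⟩
end
end
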